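/- (Marginal on vertices.) Let ε_a, ε_b, ε_c ∈ ℂ. For every σ^v ∈ {−1,+1}^{V_n}, summing the spin-vector weight over all midpoint configurations gives Σ_{σ^e ∈ {−1,+1}^{E_n}} w(σ^v, σ^e) = 2^{3n²} ∏_{g ∈ E_n} (1 + ε_g² σ^v_u σ^v_v), where for an edge g of type s with endpoints u, v we write ε_g = ε_s. -/

import Mathlib

open MeasureTheory Filter Topology

/-- The three edge types of the hexagonal lattice: `a` (horizontal),
`b` (NW/SE), `c` (NE/SW). -/
inductive EType : Type
  | a : EType
  | b : EType
  | c : EType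
deriving DecidableEq

instance instFintypeEType : Fintype EType where
  elems := {EType.a, EType.b, EType.c}
  complete := fun x => by cases x <;> simp

/-- A vertex of the (toroidal or infinite) hexagonal lattice with coordinates in `α`. -/
abbrev HexVtx (α : Type) : Type := (α × α) × Bool

/-- An edge of the hexagonal lattice: its type together with coordinates in `α`. -/
abbrev HexEdge (α : Type) : Type := EType × α × α

/-- The `s`-type edge incident to the vertex `v`. -/
def edgeAt {α : Type} [Sub α] [One α] (v : HexVtx α) : EType → HexEdge α
  | .a => (.a, v.1)
  | .b => if v.2 then (.b, v.1) else (.b, (v.1.1, v.1.2 - 1))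
  | .c => if v.2 then (.c, v.1) else (.c, (v.1.1 - 1, v.1.2))

/-- The two endpoints of an edge. -/
def ends {α : Type} [Add α] [One α] : HexEdge α → HexVtx α × HexVtx α
  | (.a, x, y) => (((x, y), false), ((x, y), true))
  | (.b, x, y) => (((x, y), true), ((x, y + 1), false))
  | (.c, x, y) => (((x, y), true), ((x + 1, y), false))

/-- The 1-2 model vertex weight of a triple of incident edge spins. -/
def vWt (a b c : ℝ) (sa sb sc : Bool) : ℝ :=
  if sb = sc ∧ sa ≠ sb then a
  else if sa = sc ∧ sb ≠ sa then b
  else if sa = sb ∧ sc ≠ sa then c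
  else 0

/-- Vertices of the toroidal lattice `H_n`. -/
abbrev VF (n : ℕ) : Type := HexVtx (ZMod n)

/-- Edges of the toroidal lattice `H_n`. -/
abbrev EF (n : ℕ) : Type := HexEdge (ZMod n)

/-- Spin configurations on the edges of `H_n`; `true` means spin `+1`. -/
abbrev ConfF (n : ℕ) : Type := EF n → Bool

/-- The 1-2 model weight of a configuration on `H_n`. -/
def confWt (n : ℕ) [NeZero n] (a b c : ℝ) (σ : ConfF n) : ℝ :=
  ∏ v : VF n, vWt a b c (σ (edgeAt v .a)) (σ (edgeAt v .b)) (σ (edgeAt v .c))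

/-- The 1-2 model partition function on `H_n`. -/
noncomputable def Zn (n : ℕ) [NeZero n] (a b c : ℝ) : ℝ :=
  ∑ σ : ConfF n, confWt n a b c σ

/-- Vertices of the infinite hexagonal lattice `H`. -/
abbrev VI : Type := HexVtx ℤ

/-- Edges of the infinite hexagonal lattice `H`. -/
abbrev EI : Type := HexEdge ℤ

/-- Configurations on the infinite lattice: the space `Ω = {−1,+1}^𝔼`. -/
abbrev Config : Type := EI → Bool

/-- Periodic lift of a configuration on `H_n` to the infinite lattice. -/
def liftConf (n : ℕ) (σ : ConfF n) : Config :=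
  fun e => σ (e.1, ((e.2.1 : ZMod n), (e.2.2 : ZMod n)))

/-- The pushforward `μ̂_n` on `Ω` of the 1-2 model measure `μ_n` on `H_n`. -/
noncomputable def muHat (n : ℕ) [NeZero n] (a b c : ℝ) : Measure Config :=
  ∑ σ : ConfF n, ENNReal.ofReal (confWt n a b c σ / Zn n a b c) •
    Measure.dirac (liftConf n σ)

/-- `μ` is the weak limit of the sequence `μ̂_n` (tested against all bounded
continuous functions). -/
def IsWeakLimit (a b c : ℝ) (μ : Measure Config) : Prop :=
  IsProbabilityMeasure μ ∧
    ∀ f : BoundedContinuousFunction Config ℝ,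
      Tendsto (fun n : ℕ => ∫ ω, f ω ∂ muHat (n + 1) a b c) atTop (𝓝 (∫ ω, f ω ∂ μ))

/-- The spin value (`±1`) of a Boolean state, as a complex number. -/
def cspin (s : Bool) : ℂ := if s then 1 else -1

/-- The spin-vector weight `w(σ^v, σ^e)` of a pair of vertex and midpoint spin
configurations on `H_n`, with half-edge constants `ε_a, ε_b, ε_c ∈ ℂ`. -/
noncomputable def spinWt (n : ℕ) [NeZero n] (ε : EType → ℂ)
    (σv : VF n → Bool) (σe : ConfF n) : ℂ :=
  ∏ v : VF n, ∏ s : EType, (1 + ε s * cspin (σv v) * cspin (σe (edgeAt v s)))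

/-!
Each factor of `w(σ^v, σ^e)` belongs to a half-edge `(v, s)`, and half-edges correspond
bijectively to pairs (edge, endpoint). Regrouping the product by edges, the midpoint spin
`σ^e_g` appears in exactly two factors, so the sum over `σ^e` factorises over the edges, and for
each edge `Σ_{s = ±1} (1 + x s)(1 + y s) = 2 (1 + x y)` because `s² = 1`.
-/

open Finset

@[simp] lemma cspin_true : cspin true = 1 := rfl

@[simp] lemma cspin_false : cspin false = -1 := rfl

lemma sum_bool_one_add_mul_cspin_mul (x y : ℂ) :
    ∑ s : Bool, (1 + x * cspin s) * (1 + y * cspin s) = 2 * (1 + x * y) := by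
  simp only [Fintype.sum_bool, cspin_true, cspin_false]
  ring

section HalfEdges

variable {α : Type} [AddGroup α] [One α]

/-- The endpoint of the edge `g` lying on the sublattice `b`. -/
def edgeEnd : HexEdge α → Bool → HexVtx α
  | (.a, x, y), b => ((x, y), b)
  | (.b, x, y), true => ((x, y), true)
  | (.b, x, y), false => ((x, y + 1), false)
  | (.c, x, y), true => ((x, y), true)
  | (.c, x, y), false => ((x + 1, y), false)

@[simp] lemma edgeAt_fst (v : HexVtx α) (s : EType) : (edgeAt v s).1 = s := by
  cases s <;> simp only [edgeAt] <;> split <;> rfl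

lemma edgeEnd_edgeAt (v : HexVtx α) (s : EType) : edgeEnd (edgeAt v s) v.2 = v := by
  obtain ⟨⟨x, y⟩, b⟩ := v
  cases s <;> cases b <;> simp [edgeAt, edgeEnd]

lemma edgeAt_edgeEnd (g : HexEdge α) (b : Bool) : edgeAt (edgeEnd g b) g.1 = g := by
  obtain ⟨s, x, y⟩ := g
  cases s <;> cases b <;> simp [edgeAt, edgeEnd]

lemma edgeEnd_snd (g : HexEdge α) (b : Bool) : (edgeEnd g b).2 = b := by
  obtain ⟨s, x, y⟩ := g
  cases s <;> cases b <;> rfl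

def halfEdgeEquiv : HexVtx α × EType ≃ HexEdge α × Bool where
  toFun p := (edgeAt p.1 p.2, p.1.2)
  invFun q := (edgeEnd q.1 q.2, q.1.1)
  left_inv p := by
    obtain ⟨v, s⟩ := p
    simp [edgeEnd_edgeAt]
  right_inv q := by
    obtain ⟨g, b⟩ := q
    simp [edgeAt_edgeEnd, edgeEnd_snd]

lemma prod_edgeEnd_eq_ends {M : Type*} [CommMonoid M] (f : HexVtx α → M) (g : HexEdge α) :
    ∏ b : Bool, f (edgeEnd g b) = f (ends g).1 * f (ends g).2 := by
  obtain ⟨s, x, y⟩ := g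
  cases s <;> simp [edgeEnd, ends, mul_comm]

lemma prod_halfEdges [Fintype α] {M : Type*} [CommMonoid M] (f : HexVtx α → HexEdge α → M) :
    ∏ v, ∏ s, f v (edgeAt v s) = ∏ g, ∏ b, f (edgeEnd g b) g := by
  rw [← Fintype.prod_prod_type', ← Fintype.prod_prod_type']
  refine Fintype.prod_equiv halfEdgeEquiv _ _ fun p => ?_
  simp [halfEdgeEquiv, edgeEnd_edgeAt]

end HalfEdges

lemma spinWt_eq_prod_edges (n : ℕ) [NeZero n] (ε : EType → ℂ) (σv : VF n → Bool)
    (σe : ConfF n) :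
    spinWt n ε σv σe =
      ∏ g : EF n, ∏ b, (1 + ε g.1 * cspin (σv (edgeEnd g b)) * cspin (σe g)) := by
  simp only [spinWt, ← prod_halfEdges (fun v g => 1 + ε g.1 * cspin (σv v) * cspin (σe g)),
    edgeAt_fst]

lemma card_EF (n : ℕ) [NeZero n] : Fintype.card (EF n) = 3 * n ^ 2 := by
  rw [Fintype.card_prod, Fintype.card_prod, ZMod.card, show Fintype.card EType = 3 from rfl]
  ring

/-- marginal on vertices. Summing the spin-vector weight over
all midpoint configurations yields an Ising-type weight on vertex spins. -/
theorem marginal_on_vertices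
    (n : ℕ) [NeZero n] (ε : EType → ℂ) (σv : VF n → Bool) :
    ∑ σe : ConfF n, spinWt n ε σv σe =
      2 ^ (3 * n ^ 2) *
        ∏ g : EF n,
          (1 + (ε g.1) ^ 2 * cspin (σv (ends g).1) * cspin (σv (ends g).2)) := by
  have edge_sum (g : EF n) :
      ∑ s, ∏ b, (1 + ε g.1 * cspin (σv (edgeEnd g b)) * cspin s) =
        2 * (1 + (ε g.1) ^ 2 * cspin (σv (ends g).1) * cspin (σv (ends g).2)) := by
    rw [Fintype.sum_congr _ _ fun s =>
      prod_edgeEnd_eq_ends (fun v => 1 + ε g.1 * cspin (σv v) * cspin s) g,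
      sum_bool_one_add_mul_cspin_mul]
    ring
  calc ∑ σe : ConfF n, spinWt n ε σv σe
      = ∏ g : EF n, ∑ s, ∏ b, (1 + ε g.1 * cspin (σv (edgeEnd g b)) * cspin s) := by
        simp only [spinWt_eq_prod_edges, Fintype.prod_sum]
    _ = 2 ^ (3 * n ^ 2) * ∏ g : EF n,
          (1 + (ε g.1) ^ 2 * cspin (σv (ends g).1) * cspin (σv (ends g).2)) := by
        simp only [edge_sum, prod_mul_distrib, prod_const, card_univ, card_EF]
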